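/- Let J be an index set, let (n_j)_{j ∈ J} be a family of positive natural numbers, and let A = Π_{j ∈ J} M_{n_j}(ℂ) be the product of the matrix algebras M_{n_j}(ℂ), with componentwise operations. Every 2-local inner derivation Δ : A → A is a derivation, i.e., Δ is additive, ℂ-homogeneous, and satisfies Δ(x·y) = Δ(x)·y + x·Δ(y) for all x, y ∈ A. -/

import Mathlib

/-!
On `Mₙ(R)`, `R` an infinite domain, the trace form makes every 2-local inner derivation `Δ`
skew: `tr (Δ x * y) = - tr (Δ y * x)`, since both sides are computed with the same `a`.
Normalise `Δ` by an inner derivation so that it kills `diag v` (with `v` injective) and the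
all-ones matrix `J`. The first forces every local implementing element to be diagonal, so
`Δ (eₖₗ)` is a multiple of `eₖₗ`; skewness against `J` shows the multiple is `0`, and
skewness against the `eₖₗ` then reads off every entry of `Δ x` as `0`. Hence `Δ` is inner on
each `Mₙ(R)`, and on a product it is inner componentwise, hence a derivation.
-/

open Matrix Function

theorem Matrix.diagonal_mul_single_sub_single_mul_diagonal {n R : Type*} [Fintype n]
    [DecidableEq n] [Ring R] (d : n → R) (i j : n) (c : R) :
    diagonal d * single i j c - single i j c * diagonal d = single i j (d i * c - c * d j) := by
  ext p q
  by_cases hpq : i = p ∧ j = q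
  · obtain ⟨rfl, rfl⟩ := hpq
    simp [mul_diagonal]
  · simp [diagonal_mul, mul_diagonal, single_apply_of_ne _ _ _ _ _ hpq]

theorem Matrix.isDiag_of_commute_diagonal {n R : Type*} [Fintype n] [DecidableEq n]
    [CommRing R] [NoZeroDivisors R] {v : n → R} (hv : Injective v) {a : Matrix n n R}
    (h : Commute a (diagonal v)) : a.IsDiag := by
  intro i j hij
  have hentry : a i j * v j = v i * a i j := by
    simpa [mul_diagonal, diagonal_mul] using congrFun (congrFun h.eq i) j
  have hv' : v j - v i ≠ 0 := sub_ne_zero.2 (hv.ne (Ne.symm hij))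
  exact (mul_eq_zero.1 (by linear_combination hentry)).resolve_right hv'

def IsTwoLocalInnerDerivation {A : Type*} [Ring A] (Δ : A → A) : Prop :=
  ∀ x y, ∃ a, Δ x = a * x - x * a ∧ Δ y = a * y - y * a

def IsInnerDerivation {A : Type*} [Ring A] (Δ : A → A) : Prop :=
  ∃ a, ∀ x, Δ x = a * x - x * a

namespace IsInnerDerivation

variable {A : Type*} [Ring A] {Δ : A → A}

theorem map_add (h : IsInnerDerivation Δ) (x y : A) : Δ (x + y) = Δ x + Δ y := by
  obtain ⟨a, ha⟩ := h
  simp only [ha]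
  noncomm_ring

theorem map_smul {R : Type*} [CommSemiring R] [Algebra R A] (h : IsInnerDerivation Δ)
    (c : R) (x : A) : Δ (c • x) = c • Δ x := by
  obtain ⟨a, ha⟩ := h
  rw [ha, ha, smul_sub, mul_smul_comm, smul_mul_assoc]

theorem map_mul (h : IsInnerDerivation Δ) (x y : A) : Δ (x * y) = Δ x * y + x * Δ y := by
  obtain ⟨a, ha⟩ := h
  simp only [ha]
  noncomm_ring

end IsInnerDerivation

namespace IsTwoLocalInnerDerivation

theorem sub_inner {A : Type*} [Ring A] {Δ : A → A} (hΔ : IsTwoLocalInnerDerivation Δ) (b : A) :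
    IsTwoLocalInnerDerivation fun x => Δ x - (b * x - x * b) := by
  intro x y
  obtain ⟨a, hx, hy⟩ := hΔ x y
  exact ⟨a - b, by simp only [hx]; noncomm_ring, by simp only [hy]; noncomm_ring⟩

section Pi

variable {ι : Type*} [DecidableEq ι] {A : ι → Type*} [∀ i, Ring (A i)]
  {Δ : (∀ i, A i) → ∀ i, A i}

theorem comp_single (hΔ : IsTwoLocalInnerDerivation Δ) (i : ι) :
    IsTwoLocalInnerDerivation fun N : A i => Δ (Pi.single i N) i := by
  intro N N'
  obtain ⟨a, hN, hN'⟩ := hΔ (Pi.single i N) (Pi.single i N')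
  exact ⟨a i, by simpa using congrFun hN i, by simpa using congrFun hN' i⟩

theorem apply_eq_apply_single (hΔ : IsTwoLocalInnerDerivation Δ) (x : ∀ i, A i) (i : ι) :
    Δ x i = Δ (Pi.single i (x i)) i := by
  obtain ⟨a, hx, hxi⟩ := hΔ x (Pi.single i (x i))
  rw [hx, hxi]
  simp

theorem isInnerDerivation_pi (hΔ : IsTwoLocalInnerDerivation Δ)
    (h : ∀ i, IsInnerDerivation fun N : A i => Δ (Pi.single i N) i) : IsInnerDerivation Δ := by
  choose c hc using h
  exact ⟨c, fun x => funext fun i => (hΔ.apply_eq_apply_single x i).trans (hc i (x i))⟩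

end Pi

section Matrix

variable {n R : Type*} [Fintype n] [DecidableEq n] [CommRing R]
  {Δ : Matrix n n R → Matrix n n R}

theorem trace_mul_add_trace_mul (hΔ : IsTwoLocalInnerDerivation Δ) (x y : Matrix n n R) :
    trace (Δ x * y) + trace (Δ y * x) = 0 := by
  obtain ⟨a, hx, hy⟩ := hΔ x y
  simp only [hx, hy, sub_mul, trace_sub, mul_assoc]
  rw [trace_mul_comm x (a * y), trace_mul_comm y (a * x)]
  simp only [mul_assoc]
  ring

theorem exists_diagonal_of_apply_diagonal_eq_zero [NoZeroDivisors R]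
    (hΔ : IsTwoLocalInnerDerivation Δ) {v : n → R} (hv : Injective v)
    (hu : Δ (diagonal v) = 0) (x : Matrix n n R) :
    ∃ d : n → R, Δ x = diagonal d * x - x * diagonal d := by
  obtain ⟨a, hau, hax⟩ := hΔ (diagonal v) x
  have hdiag : a.IsDiag :=
    isDiag_of_commute_diagonal hv (sub_eq_zero.1 (hau.symm.trans hu))
  exact ⟨a.diag, by rw [hdiag.diagonal_diag, hax]⟩

theorem eq_zero_of_apply_diagonal_eq_zero_of_apply_ones_eq_zero [NoZeroDivisors R]
    (hΔ : IsTwoLocalInnerDerivation Δ) {v : n → R} (hv : Injective v)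
    (hu : Δ (diagonal v) = 0) (hJ : Δ (of fun _ _ => 1) = 0) : Δ = 0 := by
  have hsingle : ∀ k l, Δ (single k l 1) = 0 := by
    intro k l
    obtain ⟨d, hd⟩ := hΔ.exists_diagonal_of_apply_diagonal_eq_zero hv hu (single k l 1)
    have hd' : Δ (single k l 1) = single k l (d k - d l) := by
      rw [hd, diagonal_mul_single_sub_single_mul_diagonal, mul_one, one_mul]
    -- skewness against `J`: the entry sum of `Δ (single k l 1)` vanishes
    have hsum := hΔ.trace_mul_add_trace_mul (single k l 1) (of fun _ _ => 1)
    rw [hJ, zero_mul, trace_zero, add_zero, hd', trace_single_mul] at hsum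
    rw [hd', show d k - d l = 0 by simpa using hsum, single_zero]
  funext x
  ext k l
  have hkl := hΔ.trace_mul_add_trace_mul x (single l k 1)
  rw [hsingle, zero_mul, trace_zero, add_zero, trace_mul_single] at hkl
  simpa using hkl

theorem isInnerDerivation_of_injective [NoZeroDivisors R] (hΔ : IsTwoLocalInnerDerivation Δ)
    {v : n → R} (hv : Injective v) : IsInnerDerivation Δ := by
  obtain ⟨b, hb, -⟩ := hΔ (diagonal v) (diagonal v)
  have hE := hΔ.sub_inner b
  obtain ⟨D, hD⟩ := hE.exists_diagonal_of_apply_diagonal_eq_zero hv (sub_eq_zero.2 hb)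
    (of fun _ _ => 1)
  have hF := (hE.sub_inner (diagonal D)).eq_zero_of_apply_diagonal_eq_zero_of_apply_ones_eq_zero
    hv (by simp [hb, (commute_diagonal D v).eq]) (sub_eq_zero.2 hD)
  refine ⟨b + diagonal D, fun x => ?_⟩
  have hx := congrFun hF x
  simp only [Pi.zero_apply, sub_eq_iff_eq_add] at hx
  rw [hx]
  noncomm_ring

theorem isInnerDerivation [NoZeroDivisors R] [Infinite R] (hΔ : IsTwoLocalInnerDerivation Δ) :
    IsInnerDerivation Δ :=
  hΔ.isInnerDerivation_of_injective
    ((Infinite.natEmbedding R).injective.comp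
      (Fin.val_injective.comp (Fintype.equivFin n).injective))

end Matrix

end IsTwoLocalInnerDerivation

theorem twoLocal_inner_derivation_is_derivation_product_Mn_general
    (J : Type*) (n : J → ℕ)
    (Δ : (∀ j, Matrix (Fin (n j)) (Fin (n j)) ℂ) →
         (∀ j, Matrix (Fin (n j)) (Fin (n j)) ℂ))
    (h2loc : ∀ x y : ∀ j, Matrix (Fin (n j)) (Fin (n j)) ℂ,
      ∃ a : ∀ j, Matrix (Fin (n j)) (Fin (n j)) ℂ,
        Δ x = a * x - x * a ∧ Δ y = a * y - y * a) :
    (∀ x y, Δ (x + y) = Δ x + Δ y) ∧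
    (∀ (c : ℂ) x, Δ (c • x) = c • Δ x) ∧
    (∀ x y, Δ (x * y) = Δ x * y + x * Δ y) := by
  classical
  have hΔ : IsTwoLocalInnerDerivation Δ := h2loc
  have hinner : IsInnerDerivation Δ :=
    hΔ.isInnerDerivation_pi fun j => (hΔ.comp_single j).isInnerDerivation
  exact ⟨hinner.map_add, hinner.map_smul, hinner.map_mul⟩

/-- Every 2-local inner derivation on a product of complex matrix algebras
`Π_j M_{n_j}(ℂ)` is a derivation. -/
theorem twoLocal_inner_derivation_is_derivation_product_Mn
    (J : Type*) (n : J → ℕ) (hn : ∀ j, 0 < n j)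
    (Δ : (∀ j, Matrix (Fin (n j)) (Fin (n j)) ℂ) →
         (∀ j, Matrix (Fin (n j)) (Fin (n j)) ℂ))
    (h2loc : ∀ x y : ∀ j, Matrix (Fin (n j)) (Fin (n j)) ℂ,
      ∃ a : ∀ j, Matrix (Fin (n j)) (Fin (n j)) ℂ,
        Δ x = a * x - x * a ∧ Δ y = a * y - y * a) :
    (∀ x y, Δ (x + y) = Δ x + Δ y) ∧
    (∀ (c : ℂ) x, Δ (c • x) = c • Δ x) ∧
    (∀ x y, Δ (x * y) = Δ x * y + x * Δ y) :=
  twoLocal_inner_derivation_is_derivation_product_Mn_general J n Δ h2loc
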